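/- arXiv:1806.03596 — 2 statements merged into one kernel-verified Lean document; each statement's English description precedes it below -/
import Mathlib

section
/- Let (W_j, Θ_j) be a gf-orthonormal basis for H with respect to {v_j} and let Λ = (W_j, Λ_j, v_j) be a g-fusion frame for H with the same weights. Then there exists a bounded surjective operator V : H → H such that Λ_j π_{W_j} = Θ_j π_{W_j} V* for all j ∈ J; V is given by V f = Σ_{j∈J} v_j² π_{W_j} Λ_j* Θ_j π_{W_j} f (the series converging unconditionally), and ‖V‖ ≤ √B where B is an upper g-fusion frame bound for Λ. -/
/-!
Absorbing weights and projections into `D_j = v_j Λ_j π_{W_j}` and `C_j = v_j Θ_j π_{W_j}`, the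
hypotheses say that `C` is a Parseval family with `C_i C_j* = δ_ij` and that `D` is a frame with
bounds `A, B`. The Bessel estimate `‖Σ_j D_j* g_j‖² ≤ B Σ_j ‖g_j‖²` makes `V = Σ_j D_j* C_j`
converge strongly with `‖V‖ ≤ √B`. Orthonormality gives `V C_j* = D_j*`, i.e. `C_j V* = D_j`,
so Parseval yields `‖V* f‖² = Σ_j ‖D_j f‖² ≥ A ‖f‖²`; hence `V V*` is invertible and `V` is onto.
-/

open scoped InnerProductSpace
open ContinuousLinearMap

/-- The orthogonal projection of `H` onto the closed subspace `W j`, as a map `H →L[ℂ] H`. -/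
noncomputable def gfProj {H : Type*} [NormedAddCommGroup H] [InnerProductSpace ℂ H]
    {J : Type*} (W : J → Submodule ℂ H) [∀ j, CompleteSpace (W j)] (j : J) : H →L[ℂ] H :=
  (W j).subtypeL.comp ((W j).orthogonalProjection)

section FamiliesOfOperators

variable {𝕜 E G ι : Type*} {F : ι → Type*} [RCLike 𝕜]
  [NormedAddCommGroup E] [InnerProductSpace 𝕜 E] [NormedAddCommGroup G] [InnerProductSpace 𝕜 G]
  [∀ i, NormedAddCommGroup (F i)] [∀ i, InnerProductSpace 𝕜 (F i)]

def IsBessel (T : ∀ i, E →L[𝕜] F i) (B : ℝ) : Prop :=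
  ∀ f (s : Finset ι), ∑ i ∈ s, ‖T i f‖ ^ 2 ≤ B * ‖f‖ ^ 2

def IsParseval (T : ∀ i, G →L[𝕜] F i) : Prop :=
  ∀ f, HasSum (fun i => ‖T i f‖ ^ 2) (‖f‖ ^ 2)

variable [CompleteSpace E] [∀ i, CompleteSpace (F i)]

namespace IsBessel

variable {T : ∀ i, E →L[𝕜] F i} {B : ℝ}

theorem norm_sum_adjoint_apply_sq_le (hT : IsBessel T B) (hB : 0 ≤ B) (s : Finset ι)
    (g : ∀ i, F i) : ‖∑ i ∈ s, adjoint (T i) (g i)‖ ^ 2 ≤ B * ∑ i ∈ s, ‖g i‖ ^ 2 := by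
  set x := ∑ i ∈ s, adjoint (T i) (g i)
  have hx : ‖x‖ ^ 2 ≤ ∑ i ∈ s, ‖g i‖ * ‖T i x‖ :=
    calc ‖x‖ ^ 2 = RCLike.re ⟪x, x⟫_𝕜 := (inner_self_eq_norm_sq x).symm
      _ = ∑ i ∈ s, RCLike.re ⟪g i, T i x⟫_𝕜 := by
        simp only [x, sum_inner, map_sum, adjoint_inner_left]
      _ ≤ ∑ i ∈ s, ‖g i‖ * ‖T i x‖ :=
        Finset.sum_le_sum fun i _ => (RCLike.re_le_norm _).trans (norm_inner_le_norm _ _)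
  have hcs := Finset.sum_mul_sq_le_sq_mul_sq s (fun i => ‖g i‖) (fun i => ‖T i x‖)
  have hgs : 0 ≤ ∑ i ∈ s, ‖g i‖ ^ 2 := by positivity
  have hsq : (‖x‖ ^ 2) ^ 2 ≤ (B * ∑ i ∈ s, ‖g i‖ ^ 2) * ‖x‖ ^ 2 := by
    calc (‖x‖ ^ 2) ^ 2 ≤ (∑ i ∈ s, ‖g i‖ * ‖T i x‖) ^ 2 := by gcongr
      _ ≤ (∑ i ∈ s, ‖g i‖ ^ 2) * ∑ i ∈ s, ‖T i x‖ ^ 2 := hcs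
      _ ≤ (∑ i ∈ s, ‖g i‖ ^ 2) * (B * ‖x‖ ^ 2) := by gcongr; exact hT x s
      _ = _ := by ring
  nlinarith [mul_nonneg hB hgs, sq_nonneg ‖x‖]

theorem summable_adjoint_apply (hT : IsBessel T B) (hB : 0 ≤ B) {g : ∀ i, F i}
    (hg : Summable fun i => ‖g i‖ ^ 2) : Summable fun i => adjoint (T i) (g i) := by
  rw [summable_iff_vanishing_norm]
  intro ε hε
  obtain ⟨s, hs⟩ := summable_iff_vanishing_norm.mp hg (ε ^ 2 / (B + 1)) (by positivity)
  refine ⟨s, fun t ht => ?_⟩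
  have hsmall : ∑ i ∈ t, ‖g i‖ ^ 2 < ε ^ 2 / (B + 1) :=
    (le_abs_self _).trans_lt (by simpa only [Real.norm_eq_abs] using hs t ht)
  have hlt : B * (ε ^ 2 / (B + 1)) < ε ^ 2 := by
    rw [mul_div_assoc', div_lt_iff₀ (by positivity)]
    nlinarith [sq_pos_of_pos hε]
  have := hT.norm_sum_adjoint_apply_sq_le hB t g
  nlinarith [norm_nonneg (∑ i ∈ t, adjoint (T i) (g i))]

theorem norm_tsum_adjoint_apply_sq_le (hT : IsBessel T B) (hB : 0 ≤ B) {g : ∀ i, F i}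
    (hg : Summable fun i => ‖g i‖ ^ 2) :
    ‖∑' i, adjoint (T i) (g i)‖ ^ 2 ≤ B * ∑' i, ‖g i‖ ^ 2 :=
  le_of_tendsto' ((hT.summable_adjoint_apply hB hg).hasSum.norm.pow 2) fun s =>
    (hT.norm_sum_adjoint_apply_sq_le hB s g).trans
      (by gcongr; exact hg.sum_le_tsum s fun i _ => by positivity)

theorem exists_hasSum_adjoint_apply_comp (hT : IsBessel T B) (hB : 0 ≤ B)
    {R : ∀ i, G →L[𝕜] F i} (hR : IsParseval R) :
    ∃ V : G →L[𝕜] E, (∀ f, HasSum (fun i => adjoint (T i) (R i f)) (V f)) ∧ ‖V‖ ≤ √B := by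
  have hsum f := hT.summable_adjoint_apply hB (hR f).summable
  let V : G →ₗ[𝕜] E :=
    { toFun f := ∑' i, adjoint (T i) (R i f)
      map_add' f f' := by simp only [map_add, (hsum f).tsum_add (hsum f')]
      map_smul' c f := by simp only [map_smul, (hsum f).tsum_const_smul c, RingHom.id_apply] }
  have hV f : ‖V f‖ ≤ √B * ‖f‖ := by
    rw [← Real.sqrt_sq (norm_nonneg (V f)), ← Real.sqrt_sq (norm_nonneg f), ← Real.sqrt_mul hB]
    gcongr
    refine (hT.norm_tsum_adjoint_apply_sq_le hB (hR f).summable).trans_eq ?_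
    rw [(hR f).tsum_eq]
  exact ⟨V.mkContinuous √B hV, fun f => (hsum f).hasSum,
    V.mkContinuous_norm_le (Real.sqrt_nonneg B) hV⟩

end IsBessel

theorem apply_adjoint_apply_of_inner_adjoint_eq {F₁ : Type*} [NormedAddCommGroup F₁]
    [InnerProductSpace 𝕜 F₁] [CompleteSpace F₁] (C : E →L[𝕜] F₁)
    (hC : ∀ g g', ⟪adjoint C g, adjoint C g'⟫_𝕜 = ⟪g, g'⟫_𝕜) (g : F₁) : C (adjoint C g) = g :=
  ext_inner_right 𝕜 fun g' => by rw [← adjoint_inner_right, hC]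

theorem apply_adjoint_apply_eq_zero_of_inner_adjoint_eq_zero {F₁ F₂ : Type*}
    [NormedAddCommGroup F₁] [InnerProductSpace 𝕜 F₁] [CompleteSpace F₁]
    [NormedAddCommGroup F₂] [InnerProductSpace 𝕜 F₂] [CompleteSpace F₂]
    (C₁ : E →L[𝕜] F₁) (C₂ : E →L[𝕜] F₂)
    (hC : ∀ g₁ g₂, ⟪adjoint C₁ g₁, adjoint C₂ g₂⟫_𝕜 = 0) (g : F₁) : C₂ (adjoint C₁ g) = 0 :=
  ext_inner_right 𝕜 fun g' => by rw [← adjoint_inner_right, hC, inner_zero_left]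

theorem surjective_of_le_norm_adjoint_apply [CompleteSpace G] (V : E →L[𝕜] G) {c : ℝ}
    (hc : 0 < c) (hV : ∀ y, c * ‖y‖ ^ 2 ≤ ‖adjoint V y‖ ^ 2) : Function.Surjective V := by
  have hunit : IsUnit (V ∘L adjoint V) := by
    refine isUnit_of_forall_le_norm_inner_map _ (c := ⟨c, hc.le⟩) hc fun y => ?_
    calc ‖y‖ ^ 2 * c ≤ ‖adjoint V y‖ ^ 2 := by rw [mul_comm]; exact hV y
      _ = RCLike.re ⟪(V ∘L adjoint V) y, y⟫_𝕜 := by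
        rw [apply_norm_sq_eq_inner_adjoint_left, adjoint_adjoint]
      _ ≤ ‖⟪(V ∘L adjoint V) y, y⟫_𝕜‖ := RCLike.re_le_norm _
  exact .of_comp (isUnit_iff_bijective.mp hunit).surjective

section Frame

variable {C D : ∀ i, E →L[𝕜] F i}

theorem apply_adjoint_eq_of_hasSum_adjoint_apply
    (hC_eq : ∀ j (g g' : F j), ⟪adjoint (C j) g, adjoint (C j) g'⟫_𝕜 = ⟪g, g'⟫_𝕜)
    (hC_ne : ∀ i j, i ≠ j → ∀ (gi : F i) (gj : F j),
      ⟪adjoint (C i) gi, adjoint (C j) gj⟫_𝕜 = 0)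
    {V : E →L[𝕜] E} (hV : ∀ f, HasSum (fun i => adjoint (D i) (C i f)) (V f)) (j : ι) (f : E) :
    C j (adjoint V f) = D j f := by
  have hV_adjoint (g : F j) : V (adjoint (C j) g) = adjoint (D j) g := by
    refine ((hV _).unique (hasSum_single j fun i hij => ?_)).trans ?_
    · rw [apply_adjoint_apply_eq_zero_of_inner_adjoint_eq_zero _ _ (hC_ne j i hij.symm), map_zero]
    · rw [apply_adjoint_apply_of_inner_adjoint_eq _ (hC_eq j)]
  refine ext_inner_right 𝕜 fun g => ?_
  rw [← adjoint_inner_right, adjoint_inner_left, hV_adjoint, adjoint_inner_right]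

theorem exists_surjective_hasSum_adjoint_apply_of_isParseval
    (hC_eq : ∀ j (g g' : F j), ⟪adjoint (C j) g, adjoint (C j) g'⟫_𝕜 = ⟪g, g'⟫_𝕜)
    (hC_ne : ∀ i j, i ≠ j → ∀ (gi : F i) (gj : F j),
      ⟪adjoint (C i) gi, adjoint (C j) gj⟫_𝕜 = 0)
    (hC : IsParseval C) {A B : ℝ} (hA : 0 < A) (hB : 0 ≤ B) (hD : IsBessel D B)
    (hD_lower : ∀ f, A * ‖f‖ ^ 2 ≤ ∑' i, ‖D i f‖ ^ 2) :
    ∃ V : E →L[𝕜] E, Function.Surjective V ∧ ‖V‖ ≤ √B ∧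
      (∀ f, HasSum (fun i => adjoint (D i) (C i f)) (V f)) ∧
      ∀ j f, C j (adjoint V f) = D j f := by
  obtain ⟨V, hV, hV_norm⟩ := hD.exists_hasSum_adjoint_apply_comp hB hC
  have hfactor := apply_adjoint_eq_of_hasSum_adjoint_apply hC_eq hC_ne hV
  refine ⟨V, surjective_of_le_norm_adjoint_apply V hA fun f => ?_, hV_norm, hV, hfactor⟩
  simpa only [← (hC (adjoint V f)).tsum_eq, hfactor] using hD_lower f

end Frame

end FamiliesOfOperators

section GFusion

variable {H J : Type*} [NormedAddCommGroup H] [InnerProductSpace ℂ H]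
  {Hs : J → Type*} [∀ j, NormedAddCommGroup (Hs j)] [∀ j, InnerProductSpace ℂ (Hs j)]
  (W : J → Submodule ℂ H) [∀ j, CompleteSpace (W j)] (v : J → ℝ)

noncomputable def gfComponent (Λ : ∀ j, H →L[ℂ] Hs j) (j : J) : H →L[ℂ] Hs j :=
  (v j : ℂ) • (Λ j ∘L gfProj W j)

variable (Λ : ∀ j, H →L[ℂ] Hs j)

theorem gfComponent_apply (j : J) (f : H) :
    gfComponent W v Λ j f = v j • Λ j (gfProj W j f) :=
  Complex.coe_smul _ _

theorem norm_gfComponent_apply_sq (j : J) (f : H) :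
    ‖gfComponent W v Λ j f‖ ^ 2 = v j ^ 2 * ‖Λ j (gfProj W j f)‖ ^ 2 := by
  rw [gfComponent_apply, norm_smul, mul_pow, Real.norm_eq_abs, sq_abs]

variable [CompleteSpace H] [∀ j, CompleteSpace (Hs j)]

theorem adjoint_gfProj (j : J) : adjoint (gfProj W j) = gfProj W j :=
  isSelfAdjoint_starProjection (W j)

theorem adjoint_gfComponent_apply (j : J) (g : Hs j) :
    adjoint (gfComponent W v Λ j) g = v j • gfProj W j (adjoint (Λ j) g) := by
  rw [gfComponent, map_smulₛₗ, adjoint_comp, adjoint_gfProj, Complex.conj_ofReal, smul_apply,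
    Complex.coe_smul, comp_apply]

theorem adjoint_gfComponent_apply_gfComponent_apply (Θ : ∀ j, H →L[ℂ] Hs j) (j : J) (f : H) :
    adjoint (gfComponent W v Λ j) (gfComponent W v Θ j f)
      = (v j ^ 2 : ℝ) • gfProj W j (adjoint (Λ j) (Θ j (gfProj W j f))) := by
  rw [adjoint_gfComponent_apply, gfComponent_apply, map_smul_of_tower, map_smul_of_tower,
    smul_smul, sq]

end GFusion

theorem gf_frame_factors_through_orthonormal_basis_general
    {H : Type*} [NormedAddCommGroup H] [InnerProductSpace ℂ H] [CompleteSpace H]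
    {J : Type*}
    {Hs : J → Type*} [∀ j, NormedAddCommGroup (Hs j)] [∀ j, InnerProductSpace ℂ (Hs j)]
    [∀ j, CompleteSpace (Hs j)]
    (W : J → Submodule ℂ H) [∀ j, CompleteSpace (W j)]
    (v : J → ℝ) (hv : ∀ j, 0 < v j)
    (Θ : ∀ j, H →L[ℂ] Hs j) (Λ : ∀ j, H →L[ℂ] Hs j)
    (hΘ_orth_eq : ∀ j (g g' : Hs j),
        ⟪v j • gfProj W j (adjoint (Θ j) g), v j • gfProj W j (adjoint (Θ j) g')⟫_ℂ
          = ⟪g, g'⟫_ℂ)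
    (hΘ_orth_ne : ∀ i j, i ≠ j → ∀ (gi : Hs i) (gj : Hs j),
        ⟪v i • gfProj W i (adjoint (Θ i) gi), v j • gfProj W j (adjoint (Θ j) gj)⟫_ℂ = 0)
    (hΘ_parseval : ∀ f : H,
        HasSum (fun j => (v j) ^ 2 * ‖Θ j (gfProj W j f)‖ ^ 2) (‖f‖ ^ 2))
    (A B : ℝ) (hA : 0 < A) (hAB : A ≤ B)
    (hframe : ∀ f : H,
        Summable (fun j => (v j) ^ 2 * ‖Λ j (gfProj W j f)‖ ^ 2) ∧
        A * ‖f‖ ^ 2 ≤ ∑' j, (v j) ^ 2 * ‖Λ j (gfProj W j f)‖ ^ 2 ∧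
        ∑' j, (v j) ^ 2 * ‖Λ j (gfProj W j f)‖ ^ 2 ≤ B * ‖f‖ ^ 2) :
    ∃ V : H →L[ℂ] H, Function.Surjective V ∧ ‖V‖ ≤ Real.sqrt B ∧
      (∀ f : H,
        HasSum (fun j => ((v j) ^ 2 : ℝ) •
          gfProj W j (adjoint (Λ j) (Θ j (gfProj W j f)))) (V f)) ∧
      (∀ j (f : H), Λ j (gfProj W j f) = Θ j (gfProj W j (adjoint V f))) := by
  have hΛ_bessel : IsBessel (gfComponent W v Λ) B := fun f s => by
    simp only [norm_gfComponent_apply_sq]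
    exact ((hframe f).1.sum_le_tsum s fun j _ => by positivity).trans (hframe f).2.2
  obtain ⟨V, hV_surj, hV_norm, hV_sum, hV_factor⟩ :=
    exists_surjective_hasSum_adjoint_apply_of_isParseval (C := gfComponent W v Θ)
      (by simpa only [adjoint_gfComponent_apply] using hΘ_orth_eq)
      (by simpa only [adjoint_gfComponent_apply] using hΘ_orth_ne)
      (by simpa only [IsParseval, norm_gfComponent_apply_sq] using hΘ_parseval)
      hA (hA.le.trans hAB) hΛ_bessel
      (by simpa only [norm_gfComponent_apply_sq] using fun f => (hframe f).2.1)
  refine ⟨V, hV_surj, hV_norm,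
    by simpa only [adjoint_gfComponent_apply_gfComponent_apply] using hV_sum, fun j f => ?_⟩
  have h := hV_factor j f
  rw [gfComponent_apply, gfComponent_apply] at h
  exact (smul_right_injective _ (hv j).ne' h).symm

/-- given a gf-orthonormal basis `(W_j, Θ_j)` and a g-fusion frame
`Λ = (W_j, Λ_j, v_j)` with the same weights and upper bound `B`, there is a bounded
surjective `V : H → H` with `V f = Σ_j v_j² π_{W_j} Λ_j* Θ_j π_{W_j} f` (unconditionally
convergent), `‖V‖ ≤ √B`, and `Λ_j π_{W_j} = Θ_j π_{W_j} V*` for all `j`. -/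
theorem gf_frame_factors_through_orthonormal_basis
    {H : Type*} [NormedAddCommGroup H] [InnerProductSpace ℂ H] [CompleteSpace H]
    {J : Type*} [Countable J]
    {Hs : J → Type*} [∀ j, NormedAddCommGroup (Hs j)] [∀ j, InnerProductSpace ℂ (Hs j)]
    [∀ j, CompleteSpace (Hs j)]
    (W : J → Submodule ℂ H) [∀ j, CompleteSpace (W j)]
    (v : J → ℝ) (hv : ∀ j, 0 < v j)
    (Θ : ∀ j, H →L[ℂ] Hs j) (Λ : ∀ j, H →L[ℂ] Hs j)
    (hΘ_orth_eq : ∀ j (g g' : Hs j),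
        ⟪v j • gfProj W j (adjoint (Θ j) g), v j • gfProj W j (adjoint (Θ j) g')⟫_ℂ
          = ⟪g, g'⟫_ℂ)
    (hΘ_orth_ne : ∀ i j, i ≠ j → ∀ (gi : Hs i) (gj : Hs j),
        ⟪v i • gfProj W i (adjoint (Θ i) gi), v j • gfProj W j (adjoint (Θ j) gj)⟫_ℂ = 0)
    (hΘ_parseval : ∀ f : H,
        HasSum (fun j => (v j) ^ 2 * ‖Θ j (gfProj W j f)‖ ^ 2) (‖f‖ ^ 2))
    (A B : ℝ) (hA : 0 < A) (hAB : A ≤ B)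
    (hframe : ∀ f : H,
        Summable (fun j => (v j) ^ 2 * ‖Λ j (gfProj W j f)‖ ^ 2) ∧
        A * ‖f‖ ^ 2 ≤ ∑' j, (v j) ^ 2 * ‖Λ j (gfProj W j f)‖ ^ 2 ∧
        ∑' j, (v j) ^ 2 * ‖Λ j (gfProj W j f)‖ ^ 2 ≤ B * ‖f‖ ^ 2) :
    ∃ V : H →L[ℂ] H, Function.Surjective V ∧ ‖V‖ ≤ Real.sqrt B ∧
      (∀ f : H,
        HasSum (fun j => ((v j) ^ 2 : ℝ) •
          gfProj W j (adjoint (Λ j) (Θ j (gfProj W j f)))) (V f)) ∧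
      (∀ j (f : H), Λ j (gfProj W j f) = Θ j (gfProj W j (adjoint V f))) :=
  gf_frame_factors_through_orthonormal_basis_general W v hv Θ Λ hΘ_orth_eq hΘ_orth_ne hΘ_parseval A
    B hA hAB hframe
end

section
/- Λ = (W_j, Λ_j, v_j) is a g-fusion frame for H with bounds A, B if and only if the induced sequence {u_{j,k} : j ∈ J, k ∈ K_j} is a frame for H with bounds A, B, i.e. A‖f‖² ≤ Σ_{j∈J} Σ_{k∈K_j} |⟨f, u_{j,k}⟩|² ≤ B‖f‖² for all f ∈ H. -/
open scoped InnerProductSpace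
open ContinuousLinearMap

/-! Each fibre `k ↦ |⟪u j k, f⟫|²` of the induced sequence sums, by Parseval in `H_j`, to
`v_j² ‖Λ_j π_{W_j} f‖²`; for non-negative terms, summing over `Σ j, K j` is the same as summing
the fibre sums over `J`. -/

theorem HilbertBasis.hasSum_norm_inner_sq {ι 𝕜 E : Type*} [RCLike 𝕜] [NormedAddCommGroup E]
    [InnerProductSpace 𝕜 E] (b : HilbertBasis ι 𝕜 E) (x : E) :
    HasSum (fun i => ‖⟪b i, x⟫_𝕜‖ ^ 2) (‖x‖ ^ 2) := by
  have h := lp.hasSum_norm (p := 2) (by norm_num) (b.repr x)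
  simpa only [ENNReal.toReal_ofNat, Real.rpow_two, b.repr_apply_apply,
    LinearIsometryEquiv.norm_map] using h

theorem hasSum_sigma_iff_of_nonneg {J : Type*} {K : J → Type*} {F : (Σ j, K j) → ℝ}
    (hF : ∀ p, 0 ≤ F p) {g : J → ℝ} (hg : ∀ j, HasSum (fun k => F ⟨j, k⟩) (g j)) {a : ℝ} :
    HasSum F a ↔ HasSum g a := by
  refine ⟨fun h => h.sigma hg, fun h => h.sigma_of_hasSum hg ?_⟩
  rw [summable_sigma_of_nonneg hF]
  exact ⟨fun j => (hg j).summable, by simpa only [fun j => (hg j).tsum_eq] using h.summable⟩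

theorem summable_and_tsum_sigma_iff_of_nonneg {J : Type*} {K : J → Type*}
    {F : (Σ j, K j) → ℝ} (hF : ∀ p, 0 ≤ F p) {g : J → ℝ}
    (hg : ∀ j, HasSum (fun k => F ⟨j, k⟩) (g j)) (P : ℝ → Prop) :
    (Summable F ∧ P (∑' p, F p)) ↔ (Summable g ∧ P (∑' j, g j)) := by
  have hsum : ∀ a, HasSum F a ↔ HasSum g a := fun a => hasSum_sigma_iff_of_nonneg hF hg
  constructor
  · rintro ⟨hFs, hP⟩
    have hFg := (hsum _).mp hFs.hasSum
    exact ⟨hFg.summable, hFg.tsum_eq ▸ hP⟩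
  · rintro ⟨hgs, hP⟩
    have hgF := (hsum _).mpr hgs.hasSum
    exact ⟨hgF.summable, hgF.tsum_eq ▸ hP⟩

theorem inner_smul_starProjection_adjoint_left {H F : Type*} [NormedAddCommGroup H]
    [InnerProductSpace ℂ H] [CompleteSpace H] [NormedAddCommGroup F] [InnerProductSpace ℂ F]
    [CompleteSpace F] (W : Submodule ℂ H) [W.HasOrthogonalProjection] (T : H →L[ℂ] F)
    (c : ℝ) (y : F) (f : H) :
    ⟪c • W.starProjection (adjoint T y), f⟫_ℂ = c * ⟪y, T (W.starProjection f)⟫_ℂ := by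
  rw [← Complex.coe_smul, inner_smul_left, Complex.conj_ofReal,
    W.inner_starProjection_left_eq_right, adjoint_inner_left]

theorem gfProj_eq_starProjection {H J : Type*} [NormedAddCommGroup H] [InnerProductSpace ℂ H]
    (W : J → Submodule ℂ H) [∀ j, CompleteSpace (W j)] (j : J) :
    gfProj W j = (W j).starProjection :=
  rfl

theorem gfusion_frame_iff_induced_frame_general
    {H : Type*} [NormedAddCommGroup H] [InnerProductSpace ℂ H] [CompleteSpace H]
    {J : Type*}
    {Hs : J → Type*} [∀ j, NormedAddCommGroup (Hs j)] [∀ j, InnerProductSpace ℂ (Hs j)]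
    [∀ j, CompleteSpace (Hs j)]
    (W : J → Submodule ℂ H) [∀ j, CompleteSpace (W j)]
    (v : J → ℝ)
    (Λ : ∀ j, H →L[ℂ] Hs j)
    (K : J → Type*)
    (e : ∀ j, HilbertBasis (K j) ℂ (Hs j))
    (u : ∀ j, K j → H)
    (hu : ∀ j k, u j k = v j • gfProj W j (adjoint (Λ j) (e j k)))
    (A B : ℝ) :
    (∀ f : H,
        Summable (fun j => (v j) ^ 2 * ‖Λ j (gfProj W j f)‖ ^ 2) ∧
        A * ‖f‖ ^ 2 ≤ ∑' j, (v j) ^ 2 * ‖Λ j (gfProj W j f)‖ ^ 2 ∧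
        ∑' j, (v j) ^ 2 * ‖Λ j (gfProj W j f)‖ ^ 2 ≤ B * ‖f‖ ^ 2)
      ↔
    (∀ f : H,
        Summable (fun p : Σ j, K j => ‖⟪u p.1 p.2, f⟫_ℂ‖ ^ 2) ∧
        A * ‖f‖ ^ 2 ≤ ∑' p : Σ j, K j, ‖⟪u p.1 p.2, f⟫_ℂ‖ ^ 2 ∧
        ∑' p : Σ j, K j, ‖⟪u p.1 p.2, f⟫_ℂ‖ ^ 2 ≤ B * ‖f‖ ^ 2) := by
  have hfiber : ∀ f j, HasSum (fun k => ‖⟪u j k, f⟫_ℂ‖ ^ 2)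
      ((v j) ^ 2 * ‖Λ j (gfProj W j f)‖ ^ 2) := fun f j => by
    have h := ((e j).hasSum_norm_inner_sq (Λ j (gfProj W j f))).mul_left ((v j) ^ 2)
    simpa only [hu, gfProj_eq_starProjection, inner_smul_starProjection_adjoint_left,
      norm_mul, Complex.norm_real, Real.norm_eq_abs, mul_pow, sq_abs] using h
  exact forall_congr' fun f =>
    (summable_and_tsum_sigma_iff_of_nonneg (fun p => by positivity) (hfiber f)
      (fun s => A * ‖f‖ ^ 2 ≤ s ∧ s ≤ B * ‖f‖ ^ 2)).symm

/-- `Λ = (W_j, Λ_j, v_j)` is a g-fusion frame for `H` with bounds `A, B` iff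
the induced sequence `{u_{j,k}}` is a frame for `H` with bounds `A, B`. -/
theorem gfusion_frame_iff_induced_frame
    {H : Type*} [NormedAddCommGroup H] [InnerProductSpace ℂ H] [CompleteSpace H]
    {J : Type*} [Countable J]
    {Hs : J → Type*} [∀ j, NormedAddCommGroup (Hs j)] [∀ j, InnerProductSpace ℂ (Hs j)]
    [∀ j, CompleteSpace (Hs j)]
    (W : J → Submodule ℂ H) [∀ j, CompleteSpace (W j)]
    (v : J → ℝ) (hv : ∀ j, 0 < v j)
    (Λ : ∀ j, H →L[ℂ] Hs j)
    (K : J → Type*) [∀ j, Countable (K j)]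
    (e : ∀ j, HilbertBasis (K j) ℂ (Hs j))
    (u : ∀ j, K j → H)
    (hu : ∀ j k, u j k = v j • gfProj W j (adjoint (Λ j) (e j k)))
    (A B : ℝ) (hA : 0 < A) (hAB : A ≤ B) :
    (∀ f : H,
        Summable (fun j => (v j) ^ 2 * ‖Λ j (gfProj W j f)‖ ^ 2) ∧
        A * ‖f‖ ^ 2 ≤ ∑' j, (v j) ^ 2 * ‖Λ j (gfProj W j f)‖ ^ 2 ∧
        ∑' j, (v j) ^ 2 * ‖Λ j (gfProj W j f)‖ ^ 2 ≤ B * ‖f‖ ^ 2)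
      ↔
    (∀ f : H,
        Summable (fun p : Σ j, K j => ‖⟪u p.1 p.2, f⟫_ℂ‖ ^ 2) ∧
        A * ‖f‖ ^ 2 ≤ ∑' p : Σ j, K j, ‖⟪u p.1 p.2, f⟫_ℂ‖ ^ 2 ∧
        ∑' p : Σ j, K j, ‖⟪u p.1 p.2, f⟫_ℂ‖ ^ 2 ≤ B * ‖f‖ ^ 2) :=
  gfusion_frame_iff_induced_frame_general W v Λ K e u hu A B
end
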